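/- Let X and Y be two (ε, r₀)-Reifenberg-flat domains in ℝ^N satisfying d_H(X, Y) ≤ 4r₀. Then d_H(X, Y) ≤ (8/(1−2ε)) · (|X △ Y|/ω_N)^{1/N}, where |X △ Y| is the Lebesgue measure of the symmetric difference of X and Y and ω_N is the Lebesgue measure of the unit ball in ℝ^N. -/

import Mathlib

open Metric MeasureTheory Set Filter
open scoped ENNReal InnerProductSpace NNReal Topology

noncomputable section

/-- An `(ε, r₀)`-Reifenberg-flat domain in `ℝ^N`: a nonempty open set such that
(i) at every boundary point and every scale `r ≤ r₀` the boundary is `ε r`-close in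
Hausdorff distance to a hyperplane through the point, and (ii) at scale `r₀` the two
connected components of the complement of the `2 ε r₀`-neighborhood of the hyperplane
inside the ball lie in `Ω` and in `Ωᶜ` respectively. -/
def IsReifenbergFlat {N : ℕ} (ε r₀ : ℝ) (Ω : Set (EuclideanSpace ℝ (Fin N))) : Prop :=
  Ω.Nonempty ∧ IsOpen Ω ∧
    (∀ x ∈ frontier Ω, ∀ r : ℝ, 0 < r → r ≤ r₀ →
      ∃ ν : EuclideanSpace ℝ (Fin N), ‖ν‖ = 1 ∧
        Metric.hausdorffDist (frontier Ω ∩ Metric.ball x r)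
          ({y | ⟪ν, y - x⟫_ℝ = 0} ∩ Metric.ball x r) ≤ ε * r) ∧
    (∀ x ∈ frontier Ω,
      ∃ ν : EuclideanSpace ℝ (Fin N), ‖ν‖ = 1 ∧
        Metric.hausdorffDist (frontier Ω ∩ Metric.ball x r₀)
          ({y | ⟪ν, y - x⟫_ℝ = 0} ∩ Metric.ball x r₀) ≤ ε * r₀ ∧
        {y | 2 * ε * r₀ ≤ ⟪ν, y - x⟫_ℝ} ∩ Metric.ball x r₀ ⊆ Ω ∧
        {y | ⟪ν, y - x⟫_ℝ ≤ -(2 * ε * r₀)} ∩ Metric.ball x r₀ ⊆ Ωᶜ)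

/-!
Near a boundary point `z`, flatness at scale `ρ` confines `∂Ω ∩ B(z, ρ)` to a slab of width
`2ερ`, so each of the two caps of `B(z, ρ)` outside the slab lies in `Ω` as soon as it meets `Ω`.
Condition (ii) says that one of the caps at scale `r₀` lies in `Ω`; passing from scale `ρ'` to
`ρ ≥ 5ρ'/6`, the cap at scale `ρ` pointing along the bisector of the two normals meets the cap at
scale `ρ'`, so by induction every scale `ρ ≤ r₀` has a cap in `Ω`, hence a ball of radius
`(1 - ε)ρ/2` in `Ω ∩ B(z, ρ)`.

If `x ∈ X` is at distance `D ≤ 4r₀` from `Y`, take `ρ = min (D/2) r₀ ≥ D/4`: either `B(x, ρ) ⊆ X`,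
or `B(x, ρ)` contains a boundary point of `X`. Either way `X ∩ B(x, D) ⊆ X \ Y` contains a ball of
radius `(1 - ε)ρ/2 ≥ (1 - 2ε)D/8`, and comparing volumes gives the estimate.
-/

theorem IsPreconnected.subset_of_disjoint_frontier {α : Type*} [TopologicalSpace α]
    {S Ω : Set α} (hS : IsPreconnected S) (hfr : Disjoint S (frontier Ω))
    (hmeet : (S ∩ Ω).Nonempty) : S ⊆ Ω := by
  have hint : ∀ y ∈ S, y ∈ closure Ω → y ∈ interior Ω := fun y hy hcl =>
    by_contra fun h => disjoint_left.1 hfr hy ⟨hcl, h⟩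
  have hcover : S ⊆ interior Ω ∪ interior Ωᶜ := by
    intro y hy
    by_cases hcl : y ∈ closure Ω
    · exact Or.inl (hint y hy hcl)
    · exact Or.inr (interior_compl (s := Ω) ▸ hcl)
  obtain ⟨y, hyS, hyΩ⟩ := hmeet
  refine (hS.subset_left_of_subset_union isOpen_interior isOpen_interior ?_ hcover
    ⟨y, hyS, hint y hyS (subset_closure hyΩ)⟩).trans interior_subset
  exact disjoint_compl_right.mono interior_subset interior_subset

section InnerProductSpace

variable {F : Type*} [NormedAddCommGroup F] [InnerProductSpace ℝ F]

def upperCap (z ν : F) (h ρ : ℝ) : Set F := {y | h < ⟪ν, y - z⟫_ℝ} ∩ ball z ρ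

theorem convex_upperCap (z ν : F) (h ρ : ℝ) : Convex ℝ (upperCap z ν h ρ) := by
  have hhalf : {y | h < ⟪ν, y - z⟫_ℝ} = {y | h + ⟪ν, z⟫_ℝ < ⟪ν, y⟫_ℝ} := by
    ext y
    simp only [mem_ofPred_eq, inner_sub_right, lt_sub_iff_add_lt]
  rw [upperCap, hhalf]
  exact (convex_halfSpace_gt (innerₛₗ ℝ ν).isLinear _).inter (convex_ball z ρ)

theorem abs_inner_sub_le_of_hausdorffDist_le {S : Set F} {z ν w : F} {ρ b : ℝ} (hν : ‖ν‖ ≤ 1)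
    (hS : hausdorffDist (S ∩ ball z ρ) ({y | ⟪ν, y - z⟫_ℝ = 0} ∩ ball z ρ) ≤ b)
    (hw : w ∈ S ∩ ball z ρ) : |⟪ν, w - z⟫_ℝ| ≤ b := by
  set P := {y | ⟪ν, y - z⟫_ℝ = 0} ∩ ball z ρ
  have hP : P.Nonempty := ⟨z, by simp, mem_ball_self (pos_of_mem_ball hw.2)⟩
  have hfin : hausdorffEDist (S ∩ ball z ρ) P ≠ ⊤ :=
    hausdorffEDist_ne_top_of_nonempty_of_bounded ⟨w, hw⟩ hP
      (isBounded_ball.subset inter_subset_right) (isBounded_ball.subset inter_subset_right)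
  calc |⟪ν, w - z⟫_ℝ| ≤ infDist w P := (le_infDist hP).2 fun q hq => ?_
    _ ≤ hausdorffDist (S ∩ ball z ρ) P := infDist_le_hausdorffDist_of_mem hw hfin
    _ ≤ b := hS
  have hq' : ⟪ν, q - z⟫_ℝ = 0 := hq.1
  calc |⟪ν, w - z⟫_ℝ| = |⟪ν, w - q⟫_ℝ| := by
        rw [← sub_add_sub_cancel w q z, inner_add_right, hq', add_zero]
    _ ≤ ‖ν‖ * ‖w - q‖ := abs_real_inner_le_norm ν (w - q)
    _ ≤ dist w q := by rw [dist_eq_norm]; exact mul_le_of_le_one_left (norm_nonneg _) hν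

theorem exists_mem_ball_inner_eq_inner_eq {ν ν' : F} (hν : ‖ν‖ = 1) (hν' : ‖ν'‖ = 1)
    (hνν' : 0 ≤ ⟪ν, ν'⟫_ℝ) (z : F) {a ρ : ℝ} (hρ : 0 < ρ) (haρ : 2 * a ^ 2 < ρ ^ 2) :
    ∃ y ∈ ball z ρ, ⟪ν, y - z⟫_ℝ = a ∧ ⟪ν', y - z⟫_ℝ = a := by
  set c := ⟪ν, ν'⟫_ℝ
  have hν'ν : ⟪ν', ν⟫_ℝ = c := real_inner_comm ν ν'
  have hsum : ‖ν + ν'‖ ^ 2 = 2 * (1 + c) := by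
    rw [norm_add_sq_real, hν, hν']; ring
  refine ⟨z + (a / (1 + c)) • (ν + ν'), ?_, ?_, ?_⟩
  · rw [mem_ball, dist_eq_norm, add_sub_cancel_left]
    refine lt_of_pow_lt_pow_left₀ 2 hρ.le ?_
    rw [norm_smul, mul_pow, Real.norm_eq_abs, sq_abs, hsum, div_pow]
    calc a ^ 2 / (1 + c) ^ 2 * (2 * (1 + c)) = 2 * a ^ 2 / (1 + c) := by field_simp
      _ ≤ 2 * a ^ 2 := div_le_self (by positivity) (by linarith)
      _ < ρ ^ 2 := haρ
  all_goals
    rw [add_sub_cancel_left, real_inner_smul_right, inner_add_right,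
      real_inner_self_eq_norm_sq]
    field_simp
    simp only [hν, hν', hν'ν]
    ring

theorem ball_subset_upperCap {z ν : F} (hν : ‖ν‖ = 1) {t s h ρ : ℝ} (ht : 0 ≤ t)
    (hh : h ≤ t - s) (hρ : t + s ≤ ρ) : ball (z + t • ν) s ⊆ upperCap z ν h ρ := by
  intro q hq
  set p := z + t • ν
  have hp : ⟪ν, p - z⟫_ℝ = t ∧ dist p z = t := by
    refine ⟨?_, ?_⟩
    · rw [add_sub_cancel_left, real_inner_smul_right, real_inner_self_eq_norm_sq, hν]; ring
    · rw [dist_eq_norm, add_sub_cancel_left, norm_smul, hν, mul_one, Real.norm_eq_abs,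
        abs_of_nonneg ht]
  have hqp : |⟪ν, q - p⟫_ℝ| < s := by
    calc |⟪ν, q - p⟫_ℝ| ≤ ‖ν‖ * ‖q - p‖ := abs_real_inner_le_norm ν (q - p)
      _ < s := by rw [hν, one_mul, ← dist_eq_norm]; exact hq
  refine ⟨?_, ?_⟩
  · have hsplit : ⟪ν, q - z⟫_ℝ = ⟪ν, q - p⟫_ℝ + ⟪ν, p - z⟫_ℝ := by
      rw [← inner_add_right, sub_add_sub_cancel]
    rw [mem_ofPred_eq, hsplit, hp.1]
    linarith [neg_abs_le ⟪ν, q - p⟫_ℝ]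
  · rw [mem_ball]
    linarith [dist_triangle q p z, hp.2, mem_ball.1 hq]

theorem mem_upperCap_add_smul {z ν : F} (hν : ‖ν‖ = 1) {t h ρ : ℝ} (ht : 0 ≤ t) (hh : h < t)
    (hρ : t < ρ) : z + t • ν ∈ upperCap z ν h ρ :=
  ball_subset_upperCap hν ht (by linarith [min_le_left (t - h) (ρ - t)])
    (by linarith [min_le_right (t - h) (ρ - t)])
    (mem_ball_self (lt_min (by linarith) (by linarith)))

theorem upperCap_subset_of_meets {Ω : Set F} {z ν : F} {h ρ : ℝ}
    (hflat : ∀ w ∈ frontier Ω ∩ ball z ρ, |⟪ν, w - z⟫_ℝ| ≤ h)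
    (hmeet : (upperCap z ν h ρ ∩ Ω).Nonempty) : upperCap z ν h ρ ⊆ Ω :=
  (convex_upperCap z ν h ρ).isPreconnected.subset_of_disjoint_frontier
    (disjoint_left.2 fun w hw hwΩ =>
      (hw.1.trans_le (le_abs_self _)).not_ge (hflat w ⟨hwΩ, hw.2⟩)) hmeet

end InnerProductSpace

open Module in
theorem ofReal_le_rpow_measure_div_of_ball_subset {F : Type*} [NormedAddCommGroup F]
    [NormedSpace ℝ F] [FiniteDimensional ℝ F] [Nontrivial F] [MeasurableSpace F] [BorelSpace F]
    (μ : Measure F) [μ.IsAddHaarMeasure] {S : Set F} {p : F} {r : ℝ} (hr : 0 ≤ r)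
    (hS : ball p r ⊆ S) :
    ENNReal.ofReal r ≤ (μ S / μ (ball 0 1)) ^ (1 / (finrank ℝ F : ℝ)) := by
  have hd : (finrank ℝ F : ℝ) ≠ 0 := Nat.cast_ne_zero.2 finrank_pos.ne'
  calc ENNReal.ofReal r = ENNReal.ofReal (r ^ finrank ℝ F) ^ (1 / (finrank ℝ F : ℝ)) := by
        rw [ENNReal.ofReal_pow hr, ← ENNReal.rpow_natCast, ← ENNReal.rpow_mul,
          mul_one_div_cancel hd, ENNReal.rpow_one]
    _ = (μ (ball p r) / μ (ball 0 1)) ^ (1 / (finrank ℝ F : ℝ)) := by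
        rw [Measure.addHaar_ball μ p hr, ENNReal.mul_div_cancel_right
          (measure_ball_pos μ 0 one_pos).ne' measure_ball_lt_top.ne]
    _ ≤ (μ S / μ (ball 0 1)) ^ (1 / (finrank ℝ F : ℝ)) := by
        gcongr

namespace IsReifenbergFlat

variable {N : ℕ} {ε r₀ : ℝ} {Ω : Set (EuclideanSpace ℝ (Fin N))} {z : EuclideanSpace ℝ (Fin N)}

theorem exists_upperCap_subset_at_r₀ (hε : 0 < ε) (hε2 : ε < 1 / 2) (hr₀ : 0 < r₀)
    (hΩ : IsReifenbergFlat ε r₀ Ω) (hz : z ∈ frontier Ω) :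
    ∃ ν, ‖ν‖ = 1 ∧ upperCap z ν (ε * r₀) r₀ ⊆ Ω := by
  obtain ⟨ν, hν, hH, hplus, -⟩ := hΩ.2.2.2 z hz
  have ht : 0 ≤ (1 / 2 + ε) * r₀ := by positivity
  have hy₂ := mem_upperCap_add_smul (z := z) hν ht (h := 2 * ε * r₀) (ρ := r₀)
    (by nlinarith) (by nlinarith)
  have hy₁ := mem_upperCap_add_smul (z := z) hν ht (h := ε * r₀) (ρ := r₀)
    (by nlinarith) (by nlinarith)
  refine ⟨ν, hν, upperCap_subset_of_meets
    (fun w hw => abs_inner_sub_le_of_hausdorffDist_le hν.le hH hw) ⟨_, hy₁, hplus ⟨?_, hy₂.2⟩⟩⟩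
  exact (show 2 * ε * r₀ < _ from hy₂.1).le

theorem exists_upperCap_subset_of_le (hε2 : ε < 1 / 2) (hΩ : IsReifenbergFlat ε r₀ Ω)
    (hz : z ∈ frontier Ω) {ρ ρ' : ℝ} (hρ : 0 < ρ) (hρr₀ : ρ ≤ r₀) (hρρ' : ρ ≤ ρ')
    (hρ'ρ : ρ' ≤ 6 / 5 * ρ) {ν' : EuclideanSpace ℝ (Fin N)} (hν' : ‖ν'‖ = 1)
    (hcap : upperCap z ν' (ε * ρ') ρ' ⊆ Ω) :
    ∃ ν, ‖ν‖ = 1 ∧ upperCap z ν (ε * ρ) ρ ⊆ Ω := by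
  obtain ⟨ν₀, hν₀, hH⟩ := hΩ.2.2.1 z hz ρ hρ hρr₀
  have hflat : ∀ w ∈ frontier Ω ∩ ball z ρ, |⟪ν₀, w - z⟫_ℝ| ≤ ε * ρ := fun w hw =>
    abs_inner_sub_le_of_hausdorffDist_le hν₀.le hH hw
  obtain ⟨ν, hν, hνν', hflat⟩ : ∃ ν : EuclideanSpace ℝ (Fin N), ‖ν‖ = 1 ∧ 0 ≤ ⟪ν, ν'⟫_ℝ ∧
      ∀ w ∈ frontier Ω ∩ ball z ρ, |⟪ν, w - z⟫_ℝ| ≤ ε * ρ := by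
    rcases le_total 0 ⟪ν₀, ν'⟫_ℝ with h | h
    · exact ⟨ν₀, hν₀, h, hflat⟩
    · refine ⟨-ν₀, by rwa [norm_neg], by rwa [inner_neg_left, neg_nonneg], fun w hw => ?_⟩
      rw [inner_neg_left, abs_neg]
      exact hflat w hw
  obtain ⟨y, hy, hyν, hyν'⟩ :=
    exists_mem_ball_inner_eq_inner_eq hν hν' hνν' z (a := 3 / 5 * ρ) hρ (by nlinarith)
  refine ⟨ν, hν, upperCap_subset_of_meets hflat ⟨y, ⟨?_, hy⟩, hcap ⟨?_, ?_⟩⟩⟩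
  · show ε * ρ < ⟪ν, y - z⟫_ℝ
    rw [hyν]
    nlinarith
  · show ε * ρ' < ⟪ν', y - z⟫_ℝ
    rw [hyν']
    nlinarith
  · exact ball_subset_ball hρρ' hy

theorem exists_upperCap_subset (hε : 0 < ε) (hε2 : ε < 1 / 2) (hr₀ : 0 < r₀)
    (hΩ : IsReifenbergFlat ε r₀ Ω) (hz : z ∈ frontier Ω) {ρ : ℝ} (hρ : 0 < ρ) (hρr₀ : ρ ≤ r₀) :
    ∃ ν, ‖ν‖ = 1 ∧ upperCap z ν (ε * ρ) ρ ⊆ Ω := by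
  have hscales : ∀ k : ℕ, ∀ ρ, (5 / 6) ^ k * r₀ ≤ ρ → ρ ≤ r₀ →
      ∃ ν, ‖ν‖ = 1 ∧ upperCap z ν (ε * ρ) ρ ⊆ Ω := by
    intro k
    induction k with
    | zero =>
      intro ρ hlow hup
      obtain rfl : ρ = r₀ := le_antisymm hup (by simpa using hlow)
      exact hΩ.exists_upperCap_subset_at_r₀ hε hε2 hr₀ hz
    | succ k ih =>
      intro ρ hlow hup
      rcases le_total ((5 / 6) ^ k * r₀) ρ with h | h
      · exact ih ρ h hup
      · obtain ⟨ν', hν', hcap⟩ := ih _ le_rfl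
          (mul_le_of_le_one_left hr₀.le (pow_le_one₀ (by norm_num) (by norm_num)))
        rw [pow_succ] at hlow
        exact hΩ.exists_upperCap_subset_of_le hε2 hz (hlow.trans_lt' (by positivity)) hup h
          (by linarith) hν' hcap
  obtain ⟨k, hk⟩ := exists_pow_lt_of_lt_one (div_pos hρ hr₀) (by norm_num : (5 / 6 : ℝ) < 1)
  exact hscales k ρ ((lt_div_iff₀ hr₀).1 hk).le hρr₀

theorem exists_ball_subset_inter_ball_of_mem_frontier (hε : 0 < ε) (hε2 : ε < 1 / 2)
    (hr₀ : 0 < r₀) (hΩ : IsReifenbergFlat ε r₀ Ω) (hz : z ∈ frontier Ω) {ρ : ℝ} (hρ : 0 < ρ)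
    (hρr₀ : ρ ≤ r₀) : ∃ p, ball p ((1 - ε) / 2 * ρ) ⊆ Ω ∩ ball z ρ := by
  obtain ⟨ν, hν, hcap⟩ := hΩ.exists_upperCap_subset hε hε2 hr₀ hz hρ hρr₀
  have hball : ball (z + ((1 + ε) / 2 * ρ) • ν) ((1 - ε) / 2 * ρ) ⊆ upperCap z ν (ε * ρ) ρ :=
    ball_subset_upperCap hν (by positivity) (by linarith) (by linarith)
  exact ⟨_, subset_inter (hball.trans hcap) (hball.trans inter_subset_right)⟩

theorem exists_ball_subset_inter_ball (hε : 0 < ε) (hε2 : ε < 1 / 2) (hr₀ : 0 < r₀)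
    (hΩ : IsReifenbergFlat ε r₀ Ω) {x : EuclideanSpace ℝ (Fin N)} (hx : x ∈ Ω) {ρ : ℝ}
    (hρ : 0 < ρ) (hρr₀ : ρ ≤ r₀) : ∃ p, ball p ((1 - ε) / 2 * ρ) ⊆ Ω ∩ ball x (2 * ρ) := by
  by_cases hsub : ball x ρ ⊆ Ω
  · have hsmall : ball x ((1 - ε) / 2 * ρ) ⊆ ball x ρ := ball_subset_ball (by nlinarith)
    exact ⟨x, subset_inter (hsmall.trans hsub) (hsmall.trans (ball_subset_ball (by linarith)))⟩
  obtain ⟨z, hzx, hz⟩ : (ball x ρ ∩ frontier Ω).Nonempty :=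
    not_disjoint_iff_nonempty_inter.1 fun h =>
      hsub ((convex_ball x ρ).isPreconnected.subset_of_disjoint_frontier h
        ⟨x, mem_ball_self hρ, hx⟩)
  obtain ⟨p, hp⟩ := hΩ.exists_ball_subset_inter_ball_of_mem_frontier hε hε2 hr₀ hz hρ hρr₀
  refine ⟨p, hp.trans (inter_subset_inter_right _ (ball_subset_ball' ?_))⟩
  linarith [mem_ball.1 hzx]

theorem infEDist_le_volume_diff [Nontrivial (EuclideanSpace ℝ (Fin N))] (hε : 0 < ε)
    (hε2 : ε < 1 / 2) (hr₀ : 0 < r₀) (hΩ : IsReifenbergFlat ε r₀ Ω)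
    {x : EuclideanSpace ℝ (Fin N)} (hx : x ∈ Ω) {Y : Set (EuclideanSpace ℝ (Fin N))}
    (hxY : infEDist x Y ≤ ENNReal.ofReal (4 * r₀)) :
    infEDist x Y ≤ ENNReal.ofReal (8 / (1 - 2 * ε)) *
      (volume (Ω \ Y) / volume (ball (0 : EuclideanSpace ℝ (Fin N)) 1)) ^ (1 / (N : ℝ)) := by
  set D := infDist x Y
  have hD : infEDist x Y = ENNReal.ofReal D :=
    (ENNReal.ofReal_toReal (ne_top_of_le_ne_top ENNReal.ofReal_ne_top hxY)).symm
  have hD4 : D ≤ 4 * r₀ := by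
    rwa [hD, ENNReal.ofReal_le_ofReal_iff (by positivity)] at hxY
  rcases le_or_gt D 0 with hD0 | hD0
  · rw [hD, ENNReal.ofReal_of_nonpos hD0]
    exact zero_le
  set ρ := min (D / 2) r₀
  have hρ : 0 < ρ := lt_min (by linarith) hr₀
  have hρD : D / 4 ≤ ρ := le_min (by linarith) (by linarith)
  obtain ⟨p, hp⟩ := hΩ.exists_ball_subset_inter_ball hε hε2 hr₀ hx hρ (min_le_right _ _)
  have hdiff : ball p ((1 - ε) / 2 * ρ) ⊆ Ω \ Y := fun q hq =>
    ⟨(hp hq).1, ball_infDist_subset_compl (ball_subset_ball (by linarith [min_le_left (D / 2) r₀])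
      (hp hq).2)⟩
  have hvol := ofReal_le_rpow_measure_div_of_ball_subset volume (by nlinarith) hdiff
  rw [finrank_euclideanSpace_fin] at hvol
  calc infEDist x Y = ENNReal.ofReal D := hD
    _ ≤ ENNReal.ofReal (8 / (1 - 2 * ε) * ((1 - ε) / 2 * ρ)) := by
        refine ENNReal.ofReal_le_ofReal ?_
        rw [div_mul_eq_mul_div, le_div_iff₀ (by linarith)]
        nlinarith
    _ = ENNReal.ofReal (8 / (1 - 2 * ε)) * ENNReal.ofReal ((1 - ε) / 2 * ρ) :=
        ENNReal.ofReal_mul (div_nonneg (by norm_num) (by linarith))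
    _ ≤ _ := by gcongr

end IsReifenbergFlat

/-- **Lemma (the Hausdorff distance is controlled by the measure of the symmetric
difference).** Let `X`, `Y` be `(ε, r₀)`-Reifenberg-flat domains of `ℝ^N` with
`d_H(X, Y) ≤ 4 r₀`. Then `d_H(X, Y) ≤ (8 / (1 - 2ε)) * (|X △ Y| / ω_N)^{1/N}`. -/
theorem hausdorff_controlled_by_symmDiff {N : ℕ} {ε r₀ : ℝ}
    (hε : 0 < ε) (hε2 : ε < 1 / 2) (hr₀ : 0 < r₀)
    {X Y : Set (EuclideanSpace ℝ (Fin N))}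
    (hX : IsReifenbergFlat ε r₀ X) (hY : IsReifenbergFlat ε r₀ Y)
    (hclose : EMetric.hausdorffEdist X Y ≤ ENNReal.ofReal (4 * r₀)) :
    EMetric.hausdorffEdist X Y ≤
      ENNReal.ofReal (8 / (1 - 2 * ε)) *
        (volume ((X \ Y) ∪ (Y \ X)) /
            volume (Metric.ball (0 : EuclideanSpace ℝ (Fin N)) 1)) ^ (1 / (N : ℝ)) := by
  rw [EMetric.hausdorffEdist] at hclose ⊢
  rcases subsingleton_or_nontrivial (EuclideanSpace ℝ (Fin N))
  · rw [hX.1.eq_univ, hY.1.eq_univ, hausdorffEDist_self]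
    exact zero_le
  refine hausdorffEDist_le_of_infEDist (fun x hx => ?_) (fun y hy => ?_)
  · calc infEDist x Y ≤ _ := hX.infEDist_le_volume_diff hε hε2 hr₀ hx
          ((infEDist_le_hausdorffEDist_of_mem hx).trans hclose)
      _ ≤ _ := by gcongr; exact subset_union_left
  · rw [hausdorffEDist_comm] at hclose
    calc infEDist y X ≤ _ := hY.infEDist_le_volume_diff hε hε2 hr₀ hy
          ((infEDist_le_hausdorffEDist_of_mem hy).trans hclose)
      _ ≤ _ := by gcongr; exact subset_union_right
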